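/- arXiv:2310.13027 — 2 statements merged into one kernel-verified Lean document; each statement's English description precedes it below -/
import Mathlib

section
/- Let x₁, x₂ be fixed real numbers, and let ε₁, ε₂ be independent standard Gaussian random variables. Then as σ → +∞, the probability P(softmax(x₁ + ε₁σ, x₂ + ε₂σ)[1] > 1/2) converges to 1/2. -/
/-!
The softmax weight of the first coordinate exceeds `1/2` exactly when `ε₂ - ε₁ < (x₁ - x₂) / σ`.
By independence `ε₂ - ε₁` is a centred Gaussian of variance `2`, so this probability is its
distribution function at `(x₁ - x₂) / σ`. That function is continuous (no atoms), and its value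
at `0` is `1/2` by the symmetry `ε ↦ -ε`; letting `σ → ∞` gives the claim.
-/

open MeasureTheory ProbabilityTheory Filter Set Topology

lemma one_half_lt_exp_div_exp_add_exp_iff {a b : ℝ} :
    1 / 2 < Real.exp a / (Real.exp a + Real.exp b) ↔ b < a := by
  rw [lt_div_iff₀ (by positivity)]
  exact ⟨fun h ↦ Real.exp_lt_exp.1 (by linarith), fun h ↦ by linarith [Real.exp_lt_exp.2 h]⟩

namespace ProbabilityTheory

lemma map_sub_eq_gaussianReal_of_indepFun {Ω : Type*} {mΩ : MeasurableSpace Ω} {P : Measure Ω}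
    {m₁ m₂ : ℝ} {v₁ v₂ : NNReal} {X Y : Ω → ℝ} (hXY : IndepFun X Y P)
    (hX : P.map X = gaussianReal m₁ v₁) (hY : P.map Y = gaussianReal m₂ v₂) :
    P.map (X - Y) = gaussianReal (m₁ - m₂) (v₁ + v₂) := by
  have hY_law : HasLaw Y (gaussianReal m₂ v₂) P :=
    ⟨AEMeasurable.of_map_ne_zero (hY ▸ IsProbabilityMeasure.ne_zero _), hY⟩
  rw [sub_eq_add_neg, sub_eq_add_neg]
  exact gaussianReal_add_gaussianReal_of_indepFun (hXY.comp measurable_id measurable_neg) hX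
    (gaussianReal_neg hY_law).map_eq

variable {ν : Measure ℝ} [IsProbabilityMeasure ν]

lemma continuousAt_cdf_of_measure_singleton_eq_zero {a : ℝ} (ha : ν {a} = 0) :
    ContinuousAt (cdf ν) a := by
  have hjump : ENNReal.ofReal (cdf ν a - Function.leftLim (cdf ν) a) = 0 := by
    rw [← StieltjesFunction.measure_singleton, measure_cdf, ha]
  have hleft : Function.leftLim (cdf ν) a = cdf ν a :=
    le_antisymm ((monotone_cdf ν).leftLim_le le_rfl) (by simpa [sub_nonpos] using hjump)
  rw [(monotone_cdf ν).continuousAt_iff_leftLim_eq_rightLim, hleft, (cdf ν).rightLim_eq]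

variable [NullSingletonClass ν]

lemma continuous_cdf : Continuous (cdf ν) :=
  continuous_iff_continuousAt.2 fun _ ↦
    continuousAt_cdf_of_measure_singleton_eq_zero (measure_singleton _)

lemma cdf_eq_measureReal_Iio (x : ℝ) : cdf ν x = ν.real (Iio x) := by
  rw [cdf_eq_real, measureReal_congr Iio_ae_eq_Iic]

lemma cdf_zero_of_map_neg_eq (h : ν.map Neg.neg = ν) : cdf ν 0 = 1 / 2 := by
  have hreflect : ν.real (Ioi 0) = ν.real (Iic 0) := by
    conv_lhs => rw [measureReal_congr Ioi_ae_eq_Ici, ← h]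
    rw [map_measureReal_apply measurable_neg measurableSet_Ici, neg_preimage, neg_Ici, neg_zero]
  have htotal : ν.real (Iic 0) + ν.real (Ioi 0) = 1 := by
    rw [← compl_Iic, measureReal_add_measureReal_compl measurableSet_Iic, probReal_univ]
  rw [cdf_eq_real]
  linarith

end ProbabilityTheory

theorem stmt_4_general {Ω : Type*} [MeasurableSpace Ω] (μ : Measure Ω) [IsProbabilityMeasure μ]
    (ε₁ ε₂ : Ω → ℝ)
    (h₁ : Measure.map ε₁ μ = gaussianReal 0 1) (h₂ : Measure.map ε₂ μ = gaussianReal 0 1)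
    (hind : IndepFun ε₁ ε₂ μ) (x₁ x₂ : ℝ) :
    Tendsto (fun σ : ℝ =>
        (μ {ω | Real.exp (x₁ + ε₁ ω * σ) /
            (Real.exp (x₁ + ε₁ ω * σ) + Real.exp (x₂ + ε₂ ω * σ)) > 1/2}).toReal)
      atTop (nhds (1/2)) := by
  have hlaw : μ.map (ε₂ - ε₁) = gaussianReal 0 2 := by
    rw [map_sub_eq_gaussianReal_of_indepFun hind.symm h₂ h₁, sub_zero, one_add_one_eq_two]
  have hmeas : AEMeasurable (ε₂ - ε₁) μ :=
    AEMeasurable.of_map_ne_zero (hlaw ▸ IsProbabilityMeasure.ne_zero _)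
  have := nullSingletonClass_gaussianReal (μ := 0) (v := 2) two_ne_zero
  have hcdf : cdf (gaussianReal 0 2) 0 = 1 / 2 :=
    cdf_zero_of_map_neg_eq (by rw [gaussianReal_map_neg, neg_zero])
  have hthreshold : Tendsto (fun σ : ℝ ↦ (x₁ - x₂) / σ) atTop (𝓝 0) :=
    tendsto_const_nhds.div_atTop tendsto_id
  have hlim := ((continuous_cdf (ν := gaussianReal 0 2)).tendsto 0).comp hthreshold
  rw [hcdf] at hlim
  refine hlim.congr' ?_
  filter_upwards [eventually_gt_atTop 0] with σ hσ
  have hevent : {ω | Real.exp (x₁ + ε₁ ω * σ) /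
      (Real.exp (x₁ + ε₁ ω * σ) + Real.exp (x₂ + ε₂ ω * σ)) > 1/2} =
      (ε₂ - ε₁) ⁻¹' Iio ((x₁ - x₂) / σ) := by
    ext ω
    simp only [mem_ofPred_eq, gt_iff_lt, one_half_lt_exp_div_exp_add_exp_iff, mem_preimage,
      mem_Iio, Pi.sub_apply, lt_div_iff₀ hσ]
    constructor <;> intro h <;> linarith
  rw [Function.comp_apply, cdf_eq_measureReal_Iio, ← hlaw,
    map_measureReal_apply_of_aemeasurable hmeas measurableSet_Iio, hevent, measureReal_def]

theorem stmt_4 {Ω : Type*} [MeasurableSpace Ω] (μ : Measure Ω) [IsProbabilityMeasure μ]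
    (ε₁ ε₂ : Ω → ℝ) (hm₁ : Measurable ε₁) (hm₂ : Measurable ε₂)
    (h₁ : Measure.map ε₁ μ = gaussianReal 0 1) (h₂ : Measure.map ε₂ μ = gaussianReal 0 1)
    (hind : IndepFun ε₁ ε₂ μ) (x₁ x₂ : ℝ) :
    Tendsto (fun σ : ℝ =>
        (μ {ω | Real.exp (x₁ + ε₁ ω * σ) /
            (Real.exp (x₁ + ε₁ ω * σ) + Real.exp (x₂ + ε₂ ω * σ)) > 1/2}).toReal)
      atTop (nhds (1/2)) :=
  stmt_4_general μ ε₁ ε₂ h₁ h₂ hind x₁ x₂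
end

section
/- Let α ∈ (0,1). Suppose posteriors p(ω|D_ID) ∝ p(D_ID|ω)p(ω) and p(ω|D_OOD) ∝ p(D_OOD|ω)p(ω). Then for any variational density q: D_KL(q ‖ p(·|D_ID)) - α·D_KL(q ‖ p(·|D_OOD)) = (1-α)·D_KL(q ‖ p) - E_{ω∼q}[log((p(D_ID|ω)/p(D_OOD|ω)^α))] + C, where C = log p(D_ID) - α log p(D_OOD) is a constant independent of q. Consequently, defining the generalized likelihood p(D|ω) := (p(D_ID|ω)/p(D_OOD|ω)^α)^{1/(1-α)}, the combined objective equals (1-α) times [D_KL(q ‖ p) - E_{ω∼q}[log p(D|ω)]] plus a constant, i.e., the combined ID-minimization/OOD-maximization objective equals (up to positive scaling and additive constant) the KL divergence between q and the pseudo-posterior proportional to p(D|ω)p(ω). -/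
/-! Pointwise, `log (q / (L p / Z)) = log (q / p) - log L + log Z`, so integrating against `q`
(with `∫ q = 1`) splits each posterior KL divergence into the KL divergence to the prior, minus
the expected log-likelihood, plus the log-evidence `log Z`. The combination
`KL_ID - α KL_OOD` is then linear bookkeeping, using
`log (L_ID / L_OOD ^ α) = log L_ID - α log L_OOD`; the second form only rescales by
`log (x ^ (1 / (1 - α))) = log x / (1 - α)`. -/

open MeasureTheory

section KLDecomposition

variable {α : Type*} [MeasurableSpace α] {ν : Measure α} {q p L : α → ℝ}

lemma mul_log_div_posterior (q : ℝ) {p L Z : ℝ} (hp : p ≠ 0) (hL : L ≠ 0) (hZ : Z ≠ 0) :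
    q * Real.log (q / (L * p / Z)) = q * Real.log (q / p) - q * Real.log L + q * Real.log Z := by
  rcases eq_or_ne q 0 with rfl | hq
  · simp
  rw [Real.log_div hq (by positivity), Real.log_div (by positivity) hZ, Real.log_mul hL hp,
    Real.log_div hq hp]
  ring

lemma integral_mul_log_div_posterior {Z : ℝ} (hp : ∀ ω, p ω ≠ 0) (hL : ∀ ω, L ω ≠ 0)
    (hZ : Z ≠ 0) (hq_one : ∫ ω, q ω ∂ν = 1) (hq : Integrable q ν)
    (hprior : Integrable (fun ω => q ω * Real.log (q ω / p ω)) ν)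
    (hlik : Integrable (fun ω => q ω * Real.log (L ω)) ν) :
    ∫ ω, q ω * Real.log (q ω / (L ω * p ω / Z)) ∂ν
      = (∫ ω, q ω * Real.log (q ω / p ω) ∂ν) - (∫ ω, q ω * Real.log (L ω) ∂ν) + Real.log Z := by
  simp_rw [mul_log_div_posterior _ (hp _) (hL _) hZ]
  have hdiff : Integrable (fun ω => q ω * Real.log (q ω / p ω) - q ω * Real.log (L ω)) ν :=
    hprior.sub hlik
  rw [integral_add hdiff (hq.mul_const _), integral_sub hprior hlik,
    integral_mul_const, hq_one, one_mul]

lemma integral_mul_log_div_rpow {L' : α → ℝ} {a : ℝ} (hL : ∀ ω, L ω ≠ 0) (hL' : ∀ ω, 0 < L' ω)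
    (hlik : Integrable (fun ω => q ω * Real.log (L ω)) ν)
    (hlik' : Integrable (fun ω => q ω * Real.log (L' ω)) ν) :
    ∫ ω, q ω * Real.log (L ω / L' ω ^ a) ∂ν
      = (∫ ω, q ω * Real.log (L ω) ∂ν) - a * ∫ ω, q ω * Real.log (L' ω) ∂ν := by
  have hpt : ∀ ω, q ω * Real.log (L ω / L' ω ^ a)
      = q ω * Real.log (L ω) - a * (q ω * Real.log (L' ω)) := fun ω => by
    rw [Real.log_div (hL ω) (Real.rpow_pos_of_pos (hL' ω) a).ne', Real.log_rpow (hL' ω)]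
    ring
  simp_rw [hpt]
  rw [integral_sub hlik (hlik'.const_mul a), integral_const_mul]

lemma integral_mul_log_rpow (r : ℝ) (hL : ∀ ω, 0 < L ω) :
    ∫ ω, q ω * Real.log (L ω ^ r) ∂ν = r * ∫ ω, q ω * Real.log (L ω) ∂ν := by
  simp_rw [Real.log_rpow (hL _), mul_left_comm (q _) r]
  exact integral_const_mul r _

end KLDecomposition

theorem stmt_12_general {α : Type*} [MeasurableSpace α] (ν : Measure α)
    (q p LID LOOD : α → ℝ) (ZID ZOOD : ℝ) (α' : ℝ) (hα1 : α' < 1)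
    (hp : ∀ ω, 0 < p ω)
    (hLID : ∀ ω, 0 < LID ω) (hLOOD : ∀ ω, 0 < LOOD ω)
    (hZID : 0 < ZID) (hZOOD : 0 < ZOOD)
    (hqint : ∫ ω, q ω ∂ν = 1)
    (h3 : Integrable (fun ω => q ω * Real.log (q ω / p ω)) ν)
    (h4 : Integrable (fun ω => q ω * Real.log (LID ω)) ν)
    (h5 : Integrable (fun ω => q ω * Real.log (LOOD ω)) ν)
    (h6 : Integrable q ν) :
    ((∫ ω, q ω * Real.log (q ω / (LID ω * p ω / ZID)) ∂ν)
        - α' * ∫ ω, q ω * Real.log (q ω / (LOOD ω * p ω / ZOOD)) ∂ν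
      = (1 - α') * (∫ ω, q ω * Real.log (q ω / p ω) ∂ν)
        - (∫ ω, q ω * Real.log (LID ω / LOOD ω ^ α') ∂ν)
        + (Real.log ZID - α' * Real.log ZOOD)) ∧
    ((∫ ω, q ω * Real.log (q ω / (LID ω * p ω / ZID)) ∂ν)
        - α' * ∫ ω, q ω * Real.log (q ω / (LOOD ω * p ω / ZOOD)) ∂ν
      = (1 - α') * ((∫ ω, q ω * Real.log (q ω / p ω) ∂ν)
          - ∫ ω, q ω * Real.log ((LID ω / LOOD ω ^ α') ^ (1 / (1 - α'))) ∂ν)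
        + (Real.log ZID - α' * Real.log ZOOD)) := by
  have hp' : ∀ ω, p ω ≠ 0 := fun ω => (hp ω).ne'
  have hLID' : ∀ ω, LID ω ≠ 0 := fun ω => (hLID ω).ne'
  rw [integral_mul_log_div_posterior hp' hLID' hZID.ne' hqint h6 h3 h4,
    integral_mul_log_div_posterior hp' (fun ω => (hLOOD ω).ne') hZOOD.ne' hqint h6 h3 h5,
    integral_mul_log_rpow _ fun ω => div_pos (hLID ω) (Real.rpow_pos_of_pos (hLOOD ω) α'),
    integral_mul_log_div_rpow hLID' hLOOD h4 h5]
  have h1α : 1 - α' ≠ 0 := by linarith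
  constructor
  · ring
  · field_simp
    ring

theorem stmt_12 {α : Type*} [MeasurableSpace α] (ν : Measure α)
    (q p LID LOOD : α → ℝ) (ZID ZOOD : ℝ) (α' : ℝ) (hα0 : 0 < α') (hα1 : α' < 1)
    (hq : ∀ ω, 0 < q ω) (hp : ∀ ω, 0 < p ω)
    (hLID : ∀ ω, 0 < LID ω) (hLOOD : ∀ ω, 0 < LOOD ω)
    (hZID : 0 < ZID) (hZOOD : 0 < ZOOD)
    (hqint : ∫ ω, q ω ∂ν = 1)
    (h1 : Integrable (fun ω => q ω * Real.log (q ω / (LID ω * p ω / ZID))) ν)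
    (h2 : Integrable (fun ω => q ω * Real.log (q ω / (LOOD ω * p ω / ZOOD))) ν)
    (h3 : Integrable (fun ω => q ω * Real.log (q ω / p ω)) ν)
    (h4 : Integrable (fun ω => q ω * Real.log (LID ω)) ν)
    (h5 : Integrable (fun ω => q ω * Real.log (LOOD ω)) ν)
    (h6 : Integrable q ν) :
    ((∫ ω, q ω * Real.log (q ω / (LID ω * p ω / ZID)) ∂ν)
        - α' * ∫ ω, q ω * Real.log (q ω / (LOOD ω * p ω / ZOOD)) ∂ν
      = (1 - α') * (∫ ω, q ω * Real.log (q ω / p ω) ∂ν)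
        - (∫ ω, q ω * Real.log (LID ω / LOOD ω ^ α') ∂ν)
        + (Real.log ZID - α' * Real.log ZOOD)) ∧
    ((∫ ω, q ω * Real.log (q ω / (LID ω * p ω / ZID)) ∂ν)
        - α' * ∫ ω, q ω * Real.log (q ω / (LOOD ω * p ω / ZOOD)) ∂ν
      = (1 - α') * ((∫ ω, q ω * Real.log (q ω / p ω) ∂ν)
          - ∫ ω, q ω * Real.log ((LID ω / LOOD ω ^ α') ^ (1 / (1 - α'))) ∂ν)
        + (Real.log ZID - α' * Real.log ZOOD)) :=
  stmt_12_general ν q p LID LOOD ZID ZOOD α' hα1 hp hLID hLOOD hZID hZOOD hqint h3 h4 h5 h6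
end
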